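/- arXiv:2304.13020 — 5 statements merged into one kernel-verified Lean document; each statement's English description precedes it below -/
import Mathlib

section
/- Let G be a simple star graph on n ≥ 2 vertices (one center vertex adjacent to the n−1 other vertices, with no other edges), with positive real edge weights. Then the distance matrix D(G) has exactly 1 positive eigenvalue and n−1 negative eigenvalues, i.e., its inertia is (1, 0, n−1). -/
open Matrix

/-- Number of positive eigenvalues (with multiplicity) of a real symmetric matrix. -/
noncomputable def posEig {n : ℕ} {A : Matrix (Fin n) (Fin n) ℝ} (hA : A.IsHermitian) : ℕ :=
  Nat.card {i : Fin n // 0 < hA.eigenvalues i}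

noncomputable def zeroEig {n : ℕ} {A : Matrix (Fin n) (Fin n) ℝ} (hA : A.IsHermitian) : ℕ :=
  Nat.card {i : Fin n // hA.eigenvalues i = 0}

noncomputable def negEig {n : ℕ} {A : Matrix (Fin n) (Fin n) ℝ} (hA : A.IsHermitian) : ℕ :=
  Nat.card {i : Fin n // hA.eigenvalues i < 0}

/-- Total weight of a walk: sum of weights of its edges. -/
noncomputable def walkWeight {V : Type*} {G : SimpleGraph V} (w : Sym2 V → ℝ)
    {u v : V} (p : G.Walk u v) : ℝ :=
  (p.edges.map w).sum

/-- Weighted shortest-path distance. -/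
noncomputable def wdist {V : Type*} (G : SimpleGraph V) (w : Sym2 V → ℝ) (u v : V) : ℝ :=
  sInf {x | ∃ p : G.Walk u v, walkWeight w p = x}

/-- The distance matrix of a weighted graph on `Fin n`. -/
noncomputable def distMatrix {n : ℕ} (G : SimpleGraph (Fin n)) (w : Sym2 (Fin n) → ℝ) :
    Matrix (Fin n) (Fin n) ℝ :=
  Matrix.of fun i j => wdist G w i j

/-! In a star with centre `c` and spoke weights `a i` (`a c = 0`), every path runs through the
centre, so `d i j = a i + a j` for `i ≠ j`, i.e. `D = a 1ᵀ + 1 aᵀ - 2 diag a`. On the hyperplane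
`1ᗮ` the two rank-one terms vanish and the quadratic form of `D` is `-2 ∑ a i y i ^ 2`, which is
negative definite because only `a c` vanishes. Hence at most one eigenvalue of `D` is nonnegative;
as `tr D = 0` and `n ≥ 2`, exactly one is positive and the other `n - 1` are negative. -/

namespace SimpleGraph

variable {V : Type*} {G : SimpleGraph V} {w : Sym2 V → ℝ}

@[simp]
lemma walkWeight_nil {u : V} : walkWeight w (Walk.nil : G.Walk u u) = 0 := by
  simp [walkWeight]

@[simp]
lemma walkWeight_cons {u v x : V} (h : G.Adj u v) (p : G.Walk v x) :
    walkWeight w (Walk.cons h p) = w s(u, v) + walkWeight w p := by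
  simp [walkWeight]

/-- The first and the last edge of a walk between distinct vertices contribute `a u` and `a v`. -/
lemma le_walkWeight_of_forall_adj [DecidableEq V] {a : V → ℝ} (ha : ∀ v, 0 ≤ a v)
    (hwa : ∀ u v, G.Adj u v → w s(u, v) = a u + a v) {u v : V} (p : G.Walk u v) :
    (if u = v then 0 else a u + a v) ≤ walkWeight w p := by
  induction p with
  | nil => simp
  | @cons u x v h q ih =>
    rw [walkWeight_cons, hwa u x h]
    have hu : 0 ≤ a u := ha u
    have hx : 0 ≤ a x := ha x
    split_ifs at ih ⊢ <;> subst_vars <;> linarith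

lemma wdist_eq_of_isLeast {u v : V} {d : ℝ} (hd : ∀ p : G.Walk u v, d ≤ walkWeight w p)
    (p : G.Walk u v) (hp : walkWeight w p = d) : wdist G w u v = d :=
  IsLeast.csInf_eq ⟨⟨p, hp⟩, by rintro _ ⟨q, rfl⟩; exact hd q⟩

end SimpleGraph

section Star

variable {V : Type*} [DecidableEq V] {G : SimpleGraph V} {c : V} {w : Sym2 V → ℝ}

noncomputable def spokeWeight (c : V) (w : Sym2 V → ℝ) (i : V) : ℝ :=
  if i = c then 0 else w s(i, c)

lemma spokeWeight_pos (hG : ∀ i j, G.Adj i j ↔ i ≠ j ∧ (i = c ∨ j = c))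
    (hw : ∀ e ∈ G.edgeSet, 0 < w e) {i : V} (hi : i ≠ c) : 0 < spokeWeight c w i := by
  rw [spokeWeight, if_neg hi]
  exact hw _ ((hG i c).2 ⟨hi, .inr rfl⟩)

lemma spokeWeight_nonneg (hG : ∀ i j, G.Adj i j ↔ i ≠ j ∧ (i = c ∨ j = c))
    (hw : ∀ e ∈ G.edgeSet, 0 < w e) (i : V) : 0 ≤ spokeWeight c w i := by
  by_cases hi : i = c
  · simp [spokeWeight, hi]
  · exact (spokeWeight_pos hG hw hi).le

lemma weight_eq_spokeWeight_add (hG : ∀ i j, G.Adj i j ↔ i ≠ j ∧ (i = c ∨ j = c)) {u v : V}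
    (h : G.Adj u v) : w s(u, v) = spokeWeight c w u + spokeWeight c w v := by
  obtain ⟨huv, rfl | rfl⟩ := (hG u v).1 h
  · simp [spokeWeight, huv.symm, Sym2.eq_swap]
  · simp [spokeWeight, huv]

lemma wdist_star (hG : ∀ i j, G.Adj i j ↔ i ≠ j ∧ (i = c ∨ j = c))
    (hw : ∀ e ∈ G.edgeSet, 0 < w e) (u v : V) :
    wdist G w u v = if u = v then 0 else spokeWeight c w u + spokeWeight c w v := by
  obtain ⟨p, hp⟩ : ∃ p : G.Walk u v, walkWeight w p =
      if u = v then 0 else spokeWeight c w u + spokeWeight c w v := by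
    have hadj {i : V} (hi : i ≠ c) : G.Adj i c := (hG i c).2 ⟨hi, .inr rfl⟩
    by_cases huv : u = v
    · subst huv
      exact ⟨.nil, by simp⟩
    by_cases hu : u = c
    · subst hu
      have h := (hadj (Ne.symm huv)).symm
      exact ⟨.cons h .nil, by simp [huv, weight_eq_spokeWeight_add hG h]⟩
    by_cases hv : v = c
    · subst hv
      exact ⟨.cons (hadj hu) .nil, by simp [huv, weight_eq_spokeWeight_add hG (hadj hu)]⟩
    refine ⟨.cons (hadj hu) (.cons (hadj hv).symm .nil), ?_⟩
    have hc : spokeWeight c w c = 0 := if_pos rfl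
    simp [huv, hc, weight_eq_spokeWeight_add hG (hadj hu),
      weight_eq_spokeWeight_add hG (hadj hv).symm]
  exact SimpleGraph.wdist_eq_of_isLeast (SimpleGraph.le_walkWeight_of_forall_adj
    (spokeWeight_nonneg hG hw) (fun _ _ => weight_eq_spokeWeight_add hG)) p hp

end Star

lemma of_ite_add_eq {ι : Type*} [DecidableEq ι] (a : ι → ℝ) :
    of (fun i j => if i = j then 0 else a i + a j) =
      vecMulVec a 1 + vecMulVec 1 a - (2 : ℝ) • diagonal a := by
  ext i j
  by_cases h : i = j
  · subst h; simp [vecMulVec, two_mul]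
  · simp [vecMulVec, h]

lemma dotProduct_of_ite_add_mulVec {ι : Type*} [Fintype ι] [DecidableEq ι] {a y : ι → ℝ}
    (hy : ∑ i, y i = 0) :
    y ⬝ᵥ (of (fun i j => if i = j then 0 else a i + a j) *ᵥ y) = -2 * ∑ i, a i * y i ^ 2 := by
  have h1 : 1 ⬝ᵥ y = 0 := by rwa [one_dotProduct]
  rw [of_ite_add_eq, sub_mulVec, add_mulVec, smul_mulVec, vecMulVec_mulVec, vecMulVec_mulVec,
    dotProduct_sub, dotProduct_add, op_smul_eq_smul, op_smul_eq_smul, dotProduct_smul,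
    dotProduct_smul, dotProduct_comm y 1, h1, dotProduct_smul]
  simp only [dotProduct, smul_eq_mul, Finset.mul_sum, zero_mul, Finset.sum_const_zero, mul_zero,
    add_zero, mulVec_diagonal, zero_sub, neg_mul, Finset.sum_neg_distrib, neg_inj]
  exact Finset.sum_congr rfl fun i _ => by ring

lemma sum_mul_sq_pos {ι : Type*} [Fintype ι] {a y : ι → ℝ} {c : ι} (hc : 0 ≤ a c)
    (ha : ∀ i ≠ c, 0 < a i) (hy : ∑ i, y i = 0) (hy0 : y ≠ 0) : 0 < ∑ i, a i * y i ^ 2 := by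
  obtain ⟨i, hic, hyi⟩ : ∃ i ≠ c, y i ≠ 0 := by
    by_contra! h
    refine hy0 (funext fun i => ?_)
    rcases eq_or_ne i c with rfl | hi
    · rwa [Finset.sum_eq_single_of_mem i (Finset.mem_univ i) fun j _ => h j] at hy
    · exact h i hi
  have hnonneg (j : ι) : 0 ≤ a j * y j ^ 2 := by
    rcases eq_or_ne j c with rfl | hj
    · positivity
    · exact mul_nonneg (ha j hj).le (sq_nonneg _)
  have hi : 0 < a i * y i ^ 2 := mul_pos (ha i hic) (by positivity)
  exact Finset.sum_pos' (fun j _ => hnonneg j) ⟨i, Finset.mem_univ i, hi⟩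

namespace Matrix.IsHermitian

variable {ι : Type*} [Fintype ι] [DecidableEq ι] {A : Matrix ι ι ℝ} (hA : A.IsHermitian)

lemma dotProduct_eigenvectorBasis (i j : ι) :
    ⇑(hA.eigenvectorBasis i) ⬝ᵥ ⇑(hA.eigenvectorBasis j) = if i = j then 1 else 0 := by
  rw [← orthonormal_iff_ite.mp hA.eigenvectorBasis.orthonormal i j,
    EuclideanSpace.inner_eq_star_dotProduct, star_trivial, dotProduct_comm]

/-- Two eigenvectors with nonnegative eigenvalues would span a plane meeting the hyperplane `fᗮ`. -/
lemma subsingleton_nonneg_eigenvalues (f : ι → ℝ)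
    (hneg : ∀ y, f ⬝ᵥ y = 0 → y ≠ 0 → y ⬝ᵥ (A *ᵥ y) < 0) :
    {i | 0 ≤ hA.eigenvalues i}.Subsingleton := by
  intro i hi j hj
  by_contra hij
  set v := fun k => ⇑(hA.eigenvectorBasis k)
  obtain ⟨α, β, hαβ, hf⟩ :
      ∃ α β : ℝ, 0 < α ^ 2 + β ^ 2 ∧ α * (f ⬝ᵥ v i) + β * (f ⬝ᵥ v j) = 0 := by
    by_cases h : f ⬝ᵥ v i = 0
    · exact ⟨1, 0, by norm_num, by simp [h]⟩
    · exact ⟨f ⬝ᵥ v j, -(f ⬝ᵥ v i),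
        lt_add_of_le_of_pos (sq_nonneg _) (by rwa [neg_sq, sq_pos_iff]), by ring⟩
  have hv := hA.dotProduct_eigenvectorBasis
  set y := α • v i + β • v j
  have hAy : A *ᵥ y = (α * hA.eigenvalues i) • v i + (β * hA.eigenvalues j) • v j := by
    simp only [y, v, mulVec_add, mulVec_smul, hA.mulVec_eigenvectorBasis, smul_smul]
  have hyy : y ⬝ᵥ y = α ^ 2 + β ^ 2 := by
    simp [y, v, hv, hij, Ne.symm hij, sq]
  have hyAy : y ⬝ᵥ (A *ᵥ y) = α ^ 2 * hA.eigenvalues i + β ^ 2 * hA.eigenvalues j := by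
    simp only [hAy, y, v, dotProduct_add, add_dotProduct, dotProduct_smul, smul_dotProduct, hv,
      if_pos, if_neg hij, if_neg (Ne.symm hij), smul_eq_mul]
    ring
  have hy0 : y ≠ 0 := by
    intro h
    rw [h, dotProduct_zero] at hyy
    linarith
  have hlt := hneg y (by simpa [y, dotProduct_add] using hf) hy0
  have hμi : 0 ≤ hA.eigenvalues i := hi
  have hμj : 0 ≤ hA.eigenvalues j := hj
  nlinarith [sq_nonneg α, sq_nonneg β]

end Matrix.IsHermitian

lemma card_pos_eq_one_of_sum_eq_zero {ι : Type*} [Fintype ι] {μ : ι → ℝ} (hsum : ∑ i, μ i = 0)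
    (hμ : {i | 0 ≤ μ i}.Subsingleton) (hcard : 2 ≤ Fintype.card ι) :
    Nat.card {i // 0 < μ i} = 1 ∧ Nat.card {i // μ i = 0} = 0 ∧
      Nat.card {i // μ i < 0} = Fintype.card ι - 1 := by
  obtain ⟨k, hk⟩ : ∃ k, μ k < 0 := by
    obtain ⟨i, j, hij⟩ := Fintype.exists_pair_of_one_lt_card hcard
    by_contra! h
    exact hij (hμ (h i) (h j))
  obtain ⟨p, hp⟩ : ∃ p, 0 < μ p := by
    by_contra! h
    have := Finset.sum_lt_sum (fun i _ => h i) ⟨k, Finset.mem_univ k, hk⟩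
    simp [hsum] at this
  have hneg (i : ι) : μ i < 0 ↔ i ≠ p := by
    refine ⟨fun hi h => (h ▸ hi).not_gt hp, fun hi => ?_⟩
    by_contra! h
    exact hi (hμ h hp.le)
  refine ⟨?_, ?_, ?_⟩
  · exact Nat.card_eq_one_iff_exists.2 ⟨⟨p, hp⟩, fun i => Subtype.ext (hμ i.2.le hp.le)⟩
  · have : IsEmpty {i // μ i = 0} := ⟨fun ⟨i, hi⟩ => hp.ne' (hμ hi.ge hp.le ▸ hi)⟩
    exact Nat.card_of_isEmpty
  · classical
    simp_rw [hneg, Nat.card_eq_fintype_card]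
    rw [Fintype.card_subtype_compl, Fintype.card_subtype_eq]

/-- The distance matrix of a weighted simple star on `n ≥ 2` vertices
(center `c`, positive edge weights) has inertia `(1, 0, n-1)`. -/
theorem star_inertia (n : ℕ) (hn : 2 ≤ n) (G : SimpleGraph (Fin n)) (c : Fin n)
    (hG : ∀ i j, G.Adj i j ↔ i ≠ j ∧ (i = c ∨ j = c))
    (w : Sym2 (Fin n) → ℝ) (hw : ∀ e ∈ G.edgeSet, 0 < w e)
    (hD : (distMatrix G w).IsHermitian) :
    posEig hD = 1 ∧ zeroEig hD = 0 ∧ negEig hD = n - 1 := by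
  set a := spokeWeight c w
  have hdist : distMatrix G w = of fun i j => if i = j then 0 else a i + a j :=
    ext fun i j => wdist_star hG hw i j
  have hneg (y : Fin n → ℝ) (hy : 1 ⬝ᵥ y = 0) (hy0 : y ≠ 0) :
      y ⬝ᵥ (distMatrix G w *ᵥ y) < 0 := by
    rw [one_dotProduct] at hy
    rw [hdist, dotProduct_of_ite_add_mulVec hy]
    have hpos := sum_mul_sq_pos (spokeWeight_nonneg hG hw c) (fun i => spokeWeight_pos hG hw) hy hy0
    linarith
  have hsum : ∑ i, hD.eigenvalues i = 0 := by
    have htrace : (distMatrix G w).trace = 0 := by simp [hdist, trace]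
    simpa [htrace] using hD.trace_eq_sum_eigenvalues.symm
  have hinertia := card_pos_eq_one_of_sum_eq_zero hsum (hD.subsingleton_nonneg_eigenvalues 1 hneg)
    (by rwa [Fintype.card_fin])
  rwa [Fintype.card_fin] at hinertia
end

section
/- Let T be a tree on n ≥ 2 vertices with positive real edge weights. Then the distance matrix D(T) has exactly 1 positive eigenvalue and n−1 negative eigenvalues, i.e., its inertia is (1, 0, n−1). -/
open Matrix

/-!
On a tree the distance is additive along the unique path, so `D = ∑ₑ w(e) • Cₑ`, where `Cₑ u v = 1`
exactly when deleting `e` separates `u` from `v`. If `S` is one side of the cut at `e`, then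
`xᵀ Cₑ x = 2 (∑_S x) (∑_{Sᶜ} x)`, which is `-2 (∑_S x)²` when `∑ x = 0`. So `D` is negative
semidefinite on the hyperplane `𝟙ᗮ`, and if the form vanishes at `x ∈ 𝟙ᗮ` then every cut sum of `x`
vanishes; the cuts at the edges through a vertex `v` partition the other vertices, so `x v = 0`.
Thus `D` is negative definite on a hyperplane while `𝟙ᵀ D 𝟙 > 0`, and comparing dimensions with
the span of the eigenvectors of negative eigenvalue gives exactly one positive and `n - 1`
negative eigenvalues.
-/

namespace Matrix.IsHermitian

variable {ι : Type*} [Fintype ι] [DecidableEq ι] {A : Matrix ι ι ℝ} (hA : A.IsHermitian)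
include hA

open scoped RealInnerProductSpace

lemma dotProduct_mulVec_eq_sum_eigenvalues (x : EuclideanSpace ℝ ι) :
    ⇑x ⬝ᵥ A *ᵥ ⇑x = ∑ i, hA.eigenvalues i * ⟪hA.eigenvectorBasis i, x⟫ ^ 2 := by
  set b := hA.eigenvectorBasis
  have hsymm : ∀ i, ⟪b i, toEuclideanLin A x⟫ = hA.eigenvalues i * ⟪b i, x⟫ := by
    intro i
    have hb : toEuclideanLin A (b i) = hA.eigenvalues i • b i := by
      ext j; exact congrFun (hA.mulVec_eigenvectorBasis i) j
    rw [← (isSymmetric_toEuclideanLin_iff.mpr hA) (b i) x, hb, real_inner_smul_left]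
  calc ⇑x ⬝ᵥ A *ᵥ ⇑x = ⟪x, toEuclideanLin A x⟫ := by
        simp [EuclideanSpace.inner_eq_star_dotProduct, dotProduct_comm]
    _ = ∑ i, ⟪x, b i⟫ * ⟪b i, toEuclideanLin A x⟫ := (b.sum_inner_mul_inner _ _).symm
    _ = _ := by
        refine Finset.sum_congr rfl fun i _ => ?_
        rw [hsymm, real_inner_comm]; ring

lemma exists_eigenvalues_pos {x : EuclideanSpace ℝ ι} (hx : 0 < ⇑x ⬝ᵥ A *ᵥ ⇑x) :
    ∃ i, 0 < hA.eigenvalues i := by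
  by_contra! h
  rw [hA.dotProduct_mulVec_eq_sum_eigenvalues] at hx
  exact hx.not_ge <| Finset.sum_nonpos fun i _ => mul_nonpos_of_nonpos_of_nonneg (h i) (sq_nonneg _)

lemma finrank_le_card_eigenvalues_neg (W : Submodule ℝ (EuclideanSpace ℝ ι))
    (hW : ∀ x ∈ W, x ≠ 0 → ⇑x ⬝ᵥ A *ᵥ ⇑x < 0) :
    Module.finrank ℝ W ≤ Fintype.card {i // hA.eigenvalues i < 0} := by
  set b := hA.eigenvectorBasis
  set N := Submodule.span ℝ (Set.range fun i : {i // hA.eigenvalues i < 0} => b i)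
  have hN : Module.finrank ℝ N = Fintype.card {i // hA.eigenvalues i < 0} :=
    finrank_span_eq_card (b.orthonormal.linearIndependent.comp _ Subtype.val_injective)
  have hdisj : W ⊓ Nᗮ = ⊥ := by
    refine (Submodule.eq_bot_iff _).2 fun x hxWN => ?_
    obtain ⟨hxW, hxN⟩ := Submodule.mem_inf.1 hxWN
    by_contra hx
    refine (hW x hxW hx).not_ge ?_
    rw [hA.dotProduct_mulVec_eq_sum_eigenvalues]
    refine Finset.sum_nonneg fun i _ => ?_
    rcases lt_or_ge (hA.eigenvalues i) 0 with hi | hi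
    · have hbi : b i ∈ N :=
        Submodule.subset_span (Set.mem_range_self (⟨i, hi⟩ : {i // hA.eigenvalues i < 0}))
      have h0 : ⟪hA.eigenvectorBasis i, x⟫ = 0 := Submodule.inner_right_of_mem_orthogonal hbi hxN
      simp [h0]
    · positivity
  have hsum := Submodule.finrank_sup_add_finrank_inf_eq W Nᗮ
  have hle := Submodule.finrank_le (W ⊔ Nᗮ)
  have hcompl := N.finrank_add_finrank_orthogonal
  rw [hdisj, finrank_bot] at hsum
  rw [finrank_euclideanSpace] at hle hcompl
  omega

theorem inertia_of_pos_of_neg_on_orthogonal {v : EuclideanSpace ℝ ι} (hv : 0 < ⇑v ⬝ᵥ A *ᵥ ⇑v)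
    (hneg : ∀ x ∈ (ℝ ∙ v)ᗮ, x ≠ 0 → ⇑x ⬝ᵥ A *ᵥ ⇑x < 0) :
    Fintype.card {i // 0 < hA.eigenvalues i} = 1 ∧ Fintype.card {i // hA.eigenvalues i = 0} = 0 ∧
      Fintype.card {i // hA.eigenvalues i < 0} = Fintype.card ι - 1 := by
  have hv0 : v ≠ 0 := by rintro rfl; simp at hv
  have hW := (ℝ ∙ v).finrank_add_finrank_orthogonal
  rw [finrank_span_singleton hv0, finrank_euclideanSpace] at hW
  have hnegs := hA.finrank_le_card_eigenvalues_neg _ hneg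
  obtain ⟨i, hi⟩ := hA.exists_eigenvalues_pos hv
  have hpos : 0 < Fintype.card {i // 0 < hA.eigenvalues i} := Fintype.card_pos_iff.2 ⟨⟨i, hi⟩⟩
  have htotal : Fintype.card {i // 0 < hA.eigenvalues i} + (Fintype.card
      {i // hA.eigenvalues i = 0} + Fintype.card {i // hA.eigenvalues i < 0}) ≤ Fintype.card ι := by
    classical
    rw [← Fintype.card_subtype_or_disjoint, ← Fintype.card_subtype_or_disjoint]
    · exact Fintype.card_subtype_le _
    · intro r hpos hzn i hi
      rcases hzn i hi with h | h <;> exact absurd (hpos i hi) (by simp [h.le])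
    · intro r hz hn i hi
      exact absurd (hn i hi) (by simp [hz i hi])
  omega

end Matrix.IsHermitian

namespace Matrix

variable {V : Type*} [Fintype V] [DecidableEq V]

def cutMatrix (s : Finset V) : Matrix V V ℝ :=
  of fun u v => if (u ∈ s ↔ v ∈ s) then 0 else 1

lemma cutMatrix_mulVec_apply (s : Finset V) (x : V → ℝ) (u : V) :
    (cutMatrix s *ᵥ x) u = if u ∈ s then ∑ v ∈ sᶜ, x v else ∑ v ∈ s, x v := by
  by_cases hu : u ∈ s <;>
    simp [cutMatrix, mulVec, dotProduct, hu, Finset.sum_ite, Finset.compl_eq_univ_sdiff,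
      Finset.filter_not]

lemma dotProduct_cutMatrix_mulVec (s : Finset V) (x : V → ℝ) :
    x ⬝ᵥ cutMatrix s *ᵥ x = 2 * (∑ v ∈ s, x v) * ∑ v ∈ sᶜ, x v := by
  simp only [dotProduct, cutMatrix_mulVec_apply, mul_ite, Finset.sum_ite, ← Finset.sum_mul,
    Finset.filter_mem_eq_inter, Finset.univ_inter, ← Finset.compl_filter]
  ring

lemma cutMatrix_mulVec_eq_zero_or_dotProduct_neg (s : Finset V) {x : V → ℝ}
    (hx : ∑ v, x v = 0) : cutMatrix s *ᵥ x = 0 ∨ x ⬝ᵥ cutMatrix s *ᵥ x < 0 := by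
  have hcompl : ∑ v ∈ sᶜ, x v = -∑ v ∈ s, x v := by
    rw [eq_neg_iff_add_eq_zero, add_comm, Finset.sum_add_sum_compl, hx]
  by_cases hs : ∑ v ∈ s, x v = 0
  · left
    funext u
    simp [cutMatrix_mulVec_apply, hcompl, hs]
  · right
    rw [dotProduct_cutMatrix_mulVec, hcompl]
    nlinarith [sq_pos_of_ne_zero hs]

end Matrix

namespace SimpleGraph

variable {V : Type*} {G T : SimpleGraph V}

lemma Walk.reachable_deleteEdges_or {u v : V} (p : G.Walk u v) (a b : V) :
    (G.deleteEdges {s(a, b)}).Reachable u v ∨ (G.deleteEdges {s(a, b)}).Reachable u a ∨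
      (G.deleteEdges {s(a, b)}).Reachable u b := by
  induction p with
  | nil => exact Or.inl .rfl
  | @cons u x v h q ih =>
    by_cases he : s(u, x) = s(a, b)
    · rcases Sym2.eq_iff.1 he with ⟨rfl, -⟩ | ⟨rfl, -⟩
      · exact Or.inr (Or.inl .rfl)
      · exact Or.inr (Or.inr .rfl)
    · have hux : (G.deleteEdges {s(a, b)}).Adj u x := deleteEdges_adj.2 ⟨h, he⟩
      exact ih.imp hux.reachable.trans (Or.imp hux.reachable.trans hux.reachable.trans)

lemma Preconnected.reachable_deleteEdges_or (hG : G.Preconnected) (z a b : V) :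
    (G.deleteEdges {s(a, b)}).Reachable z a ∨ (G.deleteEdges {s(a, b)}).Reachable z b :=
  ((hG z a).some.reachable_deleteEdges_or a b).elim Or.inl id

lemma IsBridge.reachable_deleteEdges_iff {a b : V} (h : G.IsBridge s(a, b)) (hG : G.Preconnected)
    (u v : V) : (G.deleteEdges {s(a, b)}).Reachable u v ↔
      ((G.deleteEdges {s(a, b)}).Reachable u a ↔ (G.deleteEdges {s(a, b)}).Reachable v a) := by
  refine ⟨fun huv => ⟨huv.symm.trans, huv.trans⟩, fun hiff => ?_⟩
  rcases hG.reachable_deleteEdges_or u a b with hua | hub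
  · exact hua.trans (hiff.1 hua).symm
  rcases hG.reachable_deleteEdges_or v a b with hva | hvb
  · exact absurd ((hiff.2 hva).symm.trans hub) (isBridge_iff.1 h)
  · exact hub.trans hvb.symm

lemma IsTree.mem_edges_iff_not_reachable_deleteEdges (hT : T.IsTree) {u v : V} {p : T.Walk u v}
    (hp : p.IsPath) (e : Sym2 V) : e ∈ p.edges ↔ ¬ (T.deleteEdges {e}).Reachable u v := by
  classical
  induction e using Sym2.ind with | _ a b => ?_
  rw [reachable_deleteEdges_iff_exists_walk, not_exists_not]
  refine ⟨fun he q => ?_, fun h => h p⟩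
  rw [(hT.existsUnique_path u v).unique hp q.bypass_isPath] at he
  exact q.edges_bypass_subset_edges he

lemma Walk.walkWeight_bypass_le [DecidableEq V] {w : Sym2 V → ℝ}
    (hw : ∀ e ∈ G.edgeSet, 0 ≤ w e) {u v : V} (p : G.Walk u v) :
    walkWeight w p.bypass ≤ walkWeight w p :=
  (p.edges_bypass_sublist_edges.map w).sum_le_sum <| by
    simpa using fun e he => hw e (p.edges_subset_edgeSet he)

lemma IsTree.wdist_eq_walkWeight (hT : T.IsTree) {w : Sym2 V → ℝ}
    (hw : ∀ e ∈ T.edgeSet, 0 ≤ w e) {u v : V} {p : T.Walk u v} (hp : p.IsPath) :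
    wdist T w u v = walkWeight w p := by
  classical
  have hmin : ∀ q : T.Walk u v, walkWeight w p ≤ walkWeight w q := fun q =>
    (hT.existsUnique_path u v).unique hp q.bypass_isPath ▸ q.walkWeight_bypass_le hw
  exact le_antisymm (csInf_le ⟨_, fun _ ⟨q, hq⟩ => hq ▸ hmin q⟩ ⟨p, rfl⟩)
    (le_csInf ⟨_, p, rfl⟩ fun _ ⟨q, hq⟩ => hq ▸ hmin q)

lemma IsTree.existsUnique_mem_not_reachable_deleteEdges (hT : T.IsTree) {u v : V} (huv : u ≠ v) :
    ∃! e : Sym2 V, v ∈ e ∧ ¬ (T.deleteEdges {e}).Reachable v u := by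
  obtain ⟨p, hp, -⟩ := hT.existsUnique_path v u
  cases p with
  | nil => exact absurd rfl huv
  | @cons _ y _ h q =>
    have hvq := ((Walk.cons_isPath_iff h q).1 hp).2
    refine ⟨s(v, y), ⟨Sym2.mem_mk_left v y,
      (hT.mem_edges_iff_not_reachable_deleteEdges hp _).1 (by simp)⟩, ?_⟩
    rintro e ⟨hve, he⟩
    rw [← hT.mem_edges_iff_not_reachable_deleteEdges hp, Walk.edges_cons, List.mem_cons] at he
    exact he.resolve_right fun he => hvq (Walk.mem_support_of_mem_edges he hve)

section Fintype

open scoped Classical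

variable [Fintype V]

-- The sum runs over all of `Sym2 V`: deleting a non-edge leaves `T` connected, so the value of
-- `w` there never enters.
lemma IsTree.wdist_eq_sum (hT : T.IsTree) {w : Sym2 V → ℝ}
    (hw : ∀ e ∈ T.edgeSet, 0 ≤ w e) (u v : V) :
    wdist T w u v = ∑ e, if (T.deleteEdges {e}).Reachable u v then 0 else w e := by
  obtain ⟨p, hp, -⟩ := hT.existsUnique_path u v
  have hedges : p.edges.toFinset = ({e | ¬ (T.deleteEdges {e}).Reachable u v} : Finset _) := by
    ext e
    simp [hT.mem_edges_iff_not_reachable_deleteEdges hp]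
  rw [hT.wdist_eq_walkWeight hw hp, walkWeight, ← List.sum_toFinset w hp.isTrail.edges_nodup,
    hedges, Finset.sum_filter]
  simp_rw [ite_not]

noncomputable def edgeCutMatrix (G : SimpleGraph V) (e : Sym2 V) : Matrix V V ℝ :=
  of fun u v => if (G.deleteEdges {e}).Reachable u v then 0 else 1

lemma IsTree.of_wdist_eq_sum_smul_edgeCutMatrix (hT : T.IsTree) {w : Sym2 V → ℝ}
    (hw : ∀ e ∈ T.edgeSet, 0 ≤ w e) : of (wdist T w) = ∑ e, w e • T.edgeCutMatrix e := by
  ext u v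
  simp [hT.wdist_eq_sum hw, edgeCutMatrix, Matrix.sum_apply]

lemma edgeCutMatrix_eq_zero (hG : G.Preconnected) {e : Sym2 V} (he : e ∉ G.edgeSet) :
    G.edgeCutMatrix e = 0 := by
  have hdel : G.deleteEdges {e} = G := deleteEdges_eq_self.2 (Set.disjoint_singleton_right.2 he)
  ext u v
  simp [edgeCutMatrix, hdel, hG u v]

lemma IsBridge.edgeCutMatrix_eq {a b : V} (h : G.IsBridge s(a, b)) (hG : G.Preconnected) :
    G.edgeCutMatrix s(a, b) = cutMatrix {z | (G.deleteEdges {s(a, b)}).Reachable z a} := by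
  ext u v
  simp [edgeCutMatrix, cutMatrix, h.reachable_deleteEdges_iff hG u v]

lemma IsTree.edgeCutMatrix_mulVec_eq_zero_or (hT : T.IsTree) {x : V → ℝ}
    (hx : ∑ v, x v = 0) (e : Sym2 V) :
    T.edgeCutMatrix e *ᵥ x = 0 ∨ (e ∈ T.edgeSet ∧ x ⬝ᵥ T.edgeCutMatrix e *ᵥ x < 0) := by
  induction e using Sym2.ind with | _ a b => ?_
  by_cases hab : T.Adj a b
  · have hbridge : T.IsBridge s(a, b) := isAcyclic_iff_forall_isBridge.1 hT.isAcyclic hab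
    rw [hbridge.edgeCutMatrix_eq hT.connected.preconnected]
    exact (cutMatrix_mulVec_eq_zero_or_dotProduct_neg _ hx).imp_right (⟨hab, ·⟩)
  · left
    rw [edgeCutMatrix_eq_zero hT.connected.preconnected hab, zero_mulVec]

lemma IsTree.sum_edgeCutMatrix_apply (hT : T.IsTree) (u v : V) :
    ∑ e ∈ {e | v ∈ e}, T.edgeCutMatrix e v u = if u = v then 0 else 1 := by
  split_ifs with huv
  · subst huv
    simp [edgeCutMatrix]
  · obtain ⟨e₀, he₀, huniq⟩ := hT.existsUnique_mem_not_reachable_deleteEdges huv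
    have hfilter : ({e | v ∈ e ∧ ¬ (T.deleteEdges {e}).Reachable v u} : Finset _) = {e₀} := by
      ext e
      simpa using ⟨huniq e, fun he => he ▸ he₀⟩
    simp only [edgeCutMatrix, of_apply, Finset.sum_ite, Finset.sum_const_zero, zero_add,
      Finset.filter_filter, hfilter]
    simp

lemma IsTree.eq_zero_of_edgeCutMatrix_mulVec_eq_zero (hT : T.IsTree) {x : V → ℝ}
    (hx : ∑ v, x v = 0) (h : ∀ e, T.edgeCutMatrix e *ᵥ x = 0) : x = 0 := by
  funext v
  calc x v = ∑ u, x u - ∑ u, (if u = v then 0 else 1) * x u := by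
        simp [ite_mul, Finset.sum_ite, Finset.filter_ne', Finset.sum_erase_eq_sub]
    _ = ∑ u, x u - ∑ e ∈ {e | v ∈ e}, (T.edgeCutMatrix e *ᵥ x) v := by
        simp only [← hT.sum_edgeCutMatrix_apply, Finset.sum_mul, mulVec, dotProduct]
        rw [Finset.sum_comm]
    _ = 0 := by simp [h, hx]

variable {w : Sym2 V → ℝ}

lemma IsTree.dotProduct_of_wdist_mulVec_neg (hT : T.IsTree) (hw : ∀ e ∈ T.edgeSet, 0 < w e)
    {x : V → ℝ} (hx : ∑ v, x v = 0) (hx₀ : x ≠ 0) : x ⬝ᵥ of (wdist T w) *ᵥ x < 0 := by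
  obtain ⟨e₀, he₀⟩ : ∃ e, T.edgeCutMatrix e *ᵥ x ≠ 0 := by
    by_contra! h
    exact hx₀ (hT.eq_zero_of_edgeCutMatrix_mulVec_eq_zero hx h)
  have hterm : ∀ e, T.edgeCutMatrix e *ᵥ x ≠ 0 → w e * (x ⬝ᵥ T.edgeCutMatrix e *ᵥ x) < 0 := by
    intro e he
    obtain ⟨hedge, hneg⟩ := (hT.edgeCutMatrix_mulVec_eq_zero_or hx e).resolve_left he
    exact mul_neg_of_pos_of_neg (hw e hedge) hneg
  rw [hT.of_wdist_eq_sum_smul_edgeCutMatrix fun e he => (hw e he).le, sum_mulVec, dotProduct_sum]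
  simp only [smul_mulVec, dotProduct_smul, smul_eq_mul]
  refine Finset.sum_neg' (fun e _ => ?_) ⟨e₀, Finset.mem_univ _, hterm e₀ he₀⟩
  by_cases he : T.edgeCutMatrix e *ᵥ x = 0
  · simp [he]
  · exact (hterm e he).le

lemma IsTree.one_dotProduct_of_wdist_mulVec_one_pos [Nontrivial V] (hT : T.IsTree)
    (hw : ∀ e ∈ T.edgeSet, 0 < w e) : 0 < 1 ⬝ᵥ of (wdist T w) *ᵥ 1 := by
  have hnonneg : ∀ u v, 0 ≤ wdist T w u v := by
    intro u v
    obtain ⟨p, hp, -⟩ := hT.existsUnique_path u v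
    rw [hT.wdist_eq_walkWeight (fun e he => (hw e he).le) hp]
    exact List.sum_nonneg (by simpa using fun e he => (hw e (p.edges_subset_edgeSet he)).le)
  obtain ⟨a, b, hab⟩ : ∃ a b, T.Adj a b := by
    obtain ⟨a⟩ := ‹Nontrivial V›.to_nonempty
    exact ⟨a, hT.connected.preconnected.exists_adj_of_nontrivial a⟩
  have hab' : 0 < wdist T w a b := by
    rw [hT.wdist_eq_walkWeight (fun e he => (hw e he).le) (Walk.IsPath.mk' (by simp [hab.ne]) :
      (Walk.cons hab Walk.nil).IsPath)]
    simpa [walkWeight] using hw _ hab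
  calc 0 < wdist T w a b := hab'
    _ ≤ ∑ v, wdist T w a v := Finset.single_le_sum (fun v _ => hnonneg a v) (Finset.mem_univ b)
    _ ≤ ∑ u, ∑ v, wdist T w u v :=
        Finset.single_le_sum (fun u _ => Finset.sum_nonneg fun v _ => hnonneg u v)
          (Finset.mem_univ a)
    _ = 1 ⬝ᵥ of (wdist T w) *ᵥ 1 := by simp [dotProduct, mulVec]

end Fintype

end SimpleGraph

/-- The distance matrix of a weighted tree on `n ≥ 2` vertices with
positive edge weights has inertia `(1, 0, n-1)`. -/
theorem tree_inertia (n : ℕ) (hn : 2 ≤ n) (T : SimpleGraph (Fin n)) (hT : T.IsTree)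
    (w : Sym2 (Fin n) → ℝ) (hw : ∀ e ∈ T.edgeSet, 0 < w e)
    (hD : (distMatrix T w).IsHermitian) :
    posEig hD = 1 ∧ zeroEig hD = 0 ∧ negEig hD = n - 1 := by
  have : Nontrivial (Fin n) := Fin.nontrivial_iff_two_le.2 hn
  have hneg : ∀ x ∈ (ℝ ∙ (WithLp.toLp 2 1 : EuclideanSpace ℝ (Fin n)))ᗮ, x ≠ 0 →
      ⇑x ⬝ᵥ distMatrix T w *ᵥ ⇑x < 0 := by
    intro x hx hx₀
    refine hT.dotProduct_of_wdist_mulVec_neg hw ?_ fun h => hx₀ ?_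
    · simpa [Submodule.mem_orthogonal_singleton_iff_inner_right,
        EuclideanSpace.inner_eq_star_dotProduct, dotProduct] using hx
    · ext i
      simp [congrFun h i]
  simpa only [posEig, zeroEig, negEig, Nat.card_eq_fintype_card, Fintype.card_fin] using
    hD.inertia_of_pos_of_neg_on_orthogonal (hT.one_dotProduct_of_wdist_mulVec_one_pos hw) hneg
end

section
/- Let G be the graph on 4 vertices obtained from the star with center v_1 and pendant vertices v_2, v_3, v_4 by adding the edge {v_2, v_3}, with positive real edge weights d_{12}, d_{13}, d_{14}, d_{23} such that ||d_{12} − d_{13}| < d_{23} < d_{12} + d_{13} (so the edge {v_2,v_3} is not redundant). Then the distance matrix D(G) has exactly 1 positive eigenvalue and 3 negative eigenvalues, i.e., its inertia is (1, 0, 3). -/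
open Matrix

/-!
Every shortest path in this graph has at most two edges, so `D(G)` can be written down explicitly
in terms of the weights `a, b, c` of the edges `01, 02, 03` and the weight `d` of the edge `12`.
Then `tr D = 0`, `tr D³ > 0`, and `det D < 0` because the strict triangle inequalities make
every term of a factorised form of `det D` negative. For the eigenvalues this says: their sum is
zero and their product is negative, so none vanishes and an odd number are negative; exactly one
negative eigenvalue `-(x + y + z)` next to positive `x, y, z` is excluded by
`x³ + y³ + z³ < (x + y + z)³`.
-/

section WeightedDistance

variable {V : Type*} {G : SimpleGraph V} (w : Sym2 V → ℝ)

@[simp]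
theorem walkWeight_nil {u : V} : walkWeight w (.nil : G.Walk u u) = 0 := by
  simp [walkWeight]

@[simp]
theorem walkWeight_cons {u x v : V} (h : G.Adj u x) (p : G.Walk x v) :
    walkWeight w (.cons h p) = w s(u, x) + walkWeight w p := by
  simp [walkWeight]

variable {w} {M : V → V → ℝ}

theorem le_walkWeight_of_forall_adj (hdiag : ∀ v, M v v ≤ 0)
    (hstep : ∀ u x v, G.Adj u x → M u v ≤ w s(u, x) + M x v) {u v : V} (p : G.Walk u v) :
    M u v ≤ walkWeight w p := by
  induction p with
  | nil => simpa using hdiag _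
  | cons h q ih => simpa using (hstep _ _ _ h).trans (by linarith)

theorem wdist_eq_of_forall_adj (hdiag : ∀ v, M v v ≤ 0)
    (hstep : ∀ u x v, G.Adj u x → M u v ≤ w s(u, x) + M x v) {u v : V}
    (hwalk : ∃ p : G.Walk u v, walkWeight w p = M u v) : wdist G w u v = M u v :=
  IsLeast.csInf_eq ⟨hwalk, by rintro _ ⟨q, rfl⟩; exact le_walkWeight_of_forall_adj hdiag hstep q⟩

end WeightedDistance

theorem Matrix.IsHermitian.trace_pow_eq_sum_eigenvalues_pow {𝕜 n : Type*} [RCLike 𝕜]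
    [Fintype n] [DecidableEq n] {A : Matrix n n 𝕜} (hA : A.IsHermitian) (k : ℕ) :
    (A ^ k).trace = ∑ i, (hA.eigenvalues i : 𝕜) ^ k := by
  conv_lhs => rw [hA.spectral_theorem, ← map_pow, Unitary.conjStarAlgAut_apply,
    trace_mul_cycle, Unitary.coe_star_mul_self, one_mul, diagonal_pow, trace_diagonal]
  rfl

theorem pos_and_neg_of_sum_eq_zero_of_mul_neg {a b c d : ℝ} (hdc : d ≤ c) (hcb : c ≤ b)
    (hba : b ≤ a) (hsum : a + b + c + d = 0) (hprod : a * b * c * d < 0)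
    (hcube : 0 < a ^ 3 + b ^ 3 + c ^ 3 + d ^ 3) : 0 < a ∧ b < 0 := by
  have hb : b < 0 := by
    by_contra! hb
    have hb : 0 < b := hb.lt_of_ne fun h ↦ by simp [← h] at hprod
    have ha : 0 < a := hb.trans_le hba
    have hcd : c * d < 0 := by
      by_contra! hcd
      nlinarith [mul_pos ha hb]
    have hc : 0 < c := by nlinarith
    obtain rfl : d = -(a + b + c) := by linarith
    nlinarith [mul_pos (mul_pos (add_pos ha hb) (add_pos hb hc)) (add_pos ha hc)]
  exact ⟨by linarith, hb⟩

theorem exists_pos_forall_ne_neg_of_sum_eq_zero (l : Fin 4 → ℝ) (hsum : ∑ i, l i = 0)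
    (hprod : ∏ i, l i < 0) (hcube : 0 < ∑ i, l i ^ 3) : ∃ i₀, 0 < l i₀ ∧ ∀ i ≠ i₀, l i < 0 := by
  set σ := Tuple.sort l
  have hmono := Tuple.monotone_sort l
  have hsum' : ∑ i, l (σ i) = 0 := by rwa [Equiv.sum_comp σ l]
  have hprod' : ∏ i, l (σ i) < 0 := by rwa [Equiv.prod_comp σ l]
  have hcube' : 0 < ∑ i, l (σ i) ^ 3 := by rwa [Equiv.sum_comp σ (fun i ↦ l i ^ 3)]
  simp only [Fin.sum_univ_four, Fin.prod_univ_four] at hsum' hprod' hcube'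
  have h01 : l (σ 0) ≤ l (σ 1) := hmono (by decide)
  have h12 : l (σ 1) ≤ l (σ 2) := hmono (by decide)
  have h23 : l (σ 2) ≤ l (σ 3) := hmono (by decide)
  obtain ⟨hpos, hneg⟩ := pos_and_neg_of_sum_eq_zero_of_mul_neg h01 h12 h23
    (by linarith) (by linarith) (by linarith)
  refine ⟨σ 3, hpos, fun i hi ↦ ?_⟩
  have hle : σ.symm i ≤ 2 := by
    have : σ.symm i ≠ 3 := fun h ↦ hi (by rw [← h, Equiv.apply_symm_apply])
    omega
  calc l i = l (σ (σ.symm i)) := by rw [Equiv.apply_symm_apply]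
    _ ≤ l (σ 2) := hmono hle
    _ < 0 := hneg

theorem card_pos_eq_one_of_forall_ne_neg {ι : Type*} [Fintype ι] (l : ι → ℝ) {i₀ : ι}
    (hpos : 0 < l i₀) (hneg : ∀ i ≠ i₀, l i < 0) :
    Nat.card {i // 0 < l i} = 1 ∧ Nat.card {i // l i = 0} = 0 ∧
      Nat.card {i // l i < 0} = Nat.card ι - 1 := by
  classical
  have hpos_iff (i : ι) : 0 < l i ↔ i = i₀ :=
    ⟨fun h ↦ by_contra fun hi ↦ (hneg i hi).not_gt h, fun h ↦ h ▸ hpos⟩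
  have hneg_iff (i : ι) : l i < 0 ↔ i ≠ i₀ :=
    ⟨fun h hi ↦ (hi ▸ hpos).not_gt h, hneg i⟩
  have hne (i : ι) : l i ≠ 0 := by
    rcases eq_or_ne i i₀ with rfl | hi
    exacts [hpos.ne', (hneg i hi).ne]
  refine ⟨?_, ?_, ?_⟩
  · simp [hpos_iff]
  · simp [hne]
  · simp [hneg_iff, Nat.card_eq_fintype_card, Fintype.card_subtype_compl]

theorem inertia_eq_of_det_neg_of_trace_pow_three_pos {A : Matrix (Fin 4) (Fin 4) ℝ}
    (hA : A.IsHermitian) (htr : A.trace = 0) (hdet : A.det < 0) (htr3 : 0 < (A ^ 3).trace) :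
    posEig hA = 1 ∧ zeroEig hA = 0 ∧ negEig hA = 3 := by
  have hsum : ∑ i, hA.eigenvalues i = 0 := by
    simpa [htr] using hA.trace_eq_sum_eigenvalues.symm
  have hprod : ∏ i, hA.eigenvalues i < 0 := by
    simpa [hA.det_eq_prod_eigenvalues] using hdet
  have hcube : 0 < ∑ i, hA.eigenvalues i ^ 3 := by
    simpa [hA.trace_pow_eq_sum_eigenvalues_pow] using htr3
  obtain ⟨i₀, hpos, hneg⟩ := exists_pos_forall_ne_neg_of_sum_eq_zero _ hsum hprod hcube
  simpa [posEig, zeroEig, negEig] using card_pos_eq_one_of_forall_ne_neg _ hpos hneg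

/-- The distance matrix of the star with centre `0` and edge weights `a, b, c` to `1, 2, 3`, plus
the edge `12` of weight `d` with `|a - b| ≤ d ≤ a + b`. -/
def starPlusEdgeDist (a b c d : ℝ) : Matrix (Fin 4) (Fin 4) ℝ :=
  !![0, a, b, c; a, 0, d, a + c; b, d, 0, b + c; c, a + c, b + c, 0]

theorem trace_starPlusEdgeDist (a b c d : ℝ) : (starPlusEdgeDist a b c d).trace = 0 := by
  simp [starPlusEdgeDist, trace, Fin.sum_univ_four]

theorem det_starPlusEdgeDist (a b c d : ℝ) :
    (starPlusEdgeDist a b c d).det =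
      -(c ^ 2 * (d - a + b) * (d + a - b) + 2 * c ^ 2 * d * (a + b - d) + 4 * a * b * c * d) := by
  simp [starPlusEdgeDist, det_succ_row_zero, Fin.sum_univ_succ, Fin.succAbove]
  ring

-- One summand per triangle of vertices: `tr D³ = 6 ∑ d_ij d_jk d_ki`.
theorem trace_pow_three_starPlusEdgeDist (a b c d : ℝ) :
    (starPlusEdgeDist a b c d ^ 3).trace =
      6 * (a * b * d + a * c * (a + c) + b * c * (b + c) + d * (a + c) * (b + c)) := by
  simp [starPlusEdgeDist, pow_succ, trace, Fin.sum_univ_four]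
  ring

theorem det_starPlusEdgeDist_neg {a b c d : ℝ} (ha : 0 < a) (hb : 0 < b) (hc : 0 < c)
    (hd : 0 < d) (hlo : |a - b| < d) (hhi : d < a + b) : (starPlusEdgeDist a b c d).det < 0 := by
  obtain ⟨hab, hba⟩ := abs_sub_lt_iff.1 hlo
  have h₁ : 0 < d - a + b := by linarith
  have h₂ : 0 < d + a - b := by linarith
  have h₃ : 0 < a + b - d := by linarith
  rw [det_starPlusEdgeDist, neg_lt_zero]
  have := mul_pos (mul_pos (pow_pos hc 2) h₁) h₂
  have := mul_pos (mul_pos (mul_pos two_pos (pow_pos hc 2)) hd) h₃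
  have : 0 < 4 * a * b * c * d := by positivity
  linarith

theorem trace_pow_three_starPlusEdgeDist_pos {a b c d : ℝ} (ha : 0 < a) (hb : 0 < b)
    (hc : 0 < c) (hd : 0 < d) : 0 < (starPlusEdgeDist a b c d ^ 3).trace := by
  rw [trace_pow_three_starPlusEdgeDist]
  positivity

theorem distMatrix_eq_starPlusEdgeDist (G : SimpleGraph (Fin 4))
    (hG : ∀ i j, G.Adj i j ↔ i ≠ j ∧ (i = 0 ∨ j = 0 ∨ s(i, j) = s(1, 2)))
    (w : Sym2 (Fin 4) → ℝ) (hw : ∀ e ∈ G.edgeSet, 0 ≤ w e)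
    (hlo : |w s(0, 1) - w s(0, 2)| ≤ w s(1, 2)) (hhi : w s(1, 2) ≤ w s(0, 1) + w s(0, 2)) :
    distMatrix G w = starPlusEdgeDist (w s(0, 1)) (w s(0, 2)) (w s(0, 3)) (w s(1, 2)) := by
  have hadj (i j : Fin 4) (h : i ≠ j ∧ (i = 0 ∨ j = 0 ∨ s(i, j) = s(1, 2)) := by decide) :
      G.Adj i j := (hG i j).2 h
  have ha := hw s(0, 1) (hadj 0 1)
  have hb := hw s(0, 2) (hadj 0 2)
  have hc := hw s(0, 3) (hadj 0 3)
  obtain ⟨hab, hba⟩ := abs_sub_le_iff.1 hlo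
  have hswap : s((1 : Fin 4), 0) = s(0, 1) ∧ s((2 : Fin 4), 0) = s(0, 2) ∧
      s((3 : Fin 4), 0) = s(0, 3) ∧ s((2 : Fin 4), 1) = s(1, 2) :=
    ⟨Sym2.eq_swap, Sym2.eq_swap, Sym2.eq_swap, Sym2.eq_swap⟩
  ext i j
  refine wdist_eq_of_forall_adj (fun v ↦ ?_) (fun u x v h ↦ ?_) ?_
  · fin_cases v <;> simp [starPlusEdgeDist]
  · rw [hG] at h
    fin_cases u <;> fin_cases x <;> fin_cases v <;>
      simp [starPlusEdgeDist, hswap] at h ⊢ <;> linarith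
  · -- a shortest path is either a single edge or passes through the centre `0`
    fin_cases i <;> fin_cases j <;>
      first
      | exact ⟨.nil, by simp [starPlusEdgeDist]⟩
      | exact ⟨.cons (hadj _ _) .nil, by simp [starPlusEdgeDist, hswap]⟩
      | exact ⟨.cons (hadj _ 0) (.cons (hadj 0 _) .nil), by simp [starPlusEdgeDist, hswap] <;> ring⟩

/-- The star on 4 vertices (center `0`) plus the edge `{1,2}`, with
positive weights satisfying the strict triangle condition on the 3-cycle (so the
added edge is not redundant), has distance matrix of inertia `(1, 0, 3)`. -/
theorem star4_plus_edge_inertia (G : SimpleGraph (Fin 4))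
    (hG : ∀ i j, G.Adj i j ↔ i ≠ j ∧ (i = 0 ∨ j = 0 ∨ s(i, j) = s(1, 2)))
    (w : Sym2 (Fin 4) → ℝ) (hw : ∀ e ∈ G.edgeSet, 0 < w e)
    (htri_lo : |w s(0, 1) - w s(0, 2)| < w s(1, 2))
    (htri_hi : w s(1, 2) < w s(0, 1) + w s(0, 2))
    (hD : (distMatrix G w).IsHermitian) :
    posEig hD = 1 ∧ zeroEig hD = 0 ∧ negEig hD = 3 := by
  have hpos (i j : Fin 4) (h : i ≠ j ∧ (i = 0 ∨ j = 0 ∨ s(i, j) = s(1, 2)) := by decide) :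
      0 < w s(i, j) := hw _ ((hG i j).2 h)
  have hM := distMatrix_eq_starPlusEdgeDist G hG w (fun e he ↦ (hw e he).le) htri_lo.le htri_hi.le
  refine inertia_eq_of_det_neg_of_trace_pow_three_pos hD ?_ ?_ ?_ <;> rw [hM]
  · exact trace_starPlusEdgeDist ..
  · exact det_starPlusEdgeDist_neg (hpos 0 1) (hpos 0 2) (hpos 0 3) (hpos 1 2) htri_lo htri_hi
  · exact trace_pow_three_starPlusEdgeDist_pos (hpos 0 1) (hpos 0 2) (hpos 0 3) (hpos 1 2)
end

section
/- Let T be a tree on n ≥ 2 vertices with positive real edge weights, with vertices labeled v_1, ..., v_n so that for each i ≥ 2 the vertex v_i has a unique neighbor a(i) on the path from v_i to v_1 (its parent), and let d_i (for 1 ≤ i ≤ n−1) denote the weight of the edge between v_{i+1} and its parent. Then the distance matrix D(T) is congruent to the n×n arrowhead matrix M with M_{1,1} = 0, M_{1,i+1} = M_{i+1,1} = d_i, M_{i+1,i+1} = −2 d_i, and all other entries 0; that is, there exists an invertible real n×n matrix S with S · D(T) · Sᵀ = M. -/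
open Matrix

namespace TreeCongr

open SimpleGraph Walk

variable {V : Type*} [DecidableEq V] {G : SimpleGraph V} {w : Sym2 V → ℝ}

lemma walkWeight_nonneg (hw : ∀ e ∈ G.edgeSet, 0 < w e) {u v : V} (p : G.Walk u v) :
    0 ≤ walkWeight w p := by
  apply List.sum_nonneg
  intro x hx
  obtain ⟨e, he, rfl⟩ := List.mem_map.1 hx
  exact (hw e (p.edges_subset_edgeSet he)).le

lemma walkWeight_le (hw : ∀ e ∈ G.edgeSet, 0 < w e) {u v u' v' : V} {p : G.Walk u v}
    {q : G.Walk u' v'} (hp : p.IsPath) (hsub : p.edges ⊆ q.edges) :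
    walkWeight w p ≤ walkWeight w q := by
  have hperm : List.Subperm p.edges q.edges :=
    List.subperm_of_subset hp.edges_nodup hsub
  have h2 : (↑p.edges : Multiset (Sym2 V)) ≤ ↑q.edges := Multiset.coe_le.2 hperm
  have h3 : Multiset.map w ↑p.edges ≤ Multiset.map w ↑q.edges := Multiset.map_le_map h2
  obtain ⟨u0, hu0⟩ := Multiset.le_iff_exists_add.1 h3
  have hnn : 0 ≤ u0.sum := by
    apply Multiset.sum_nonneg
    intro x hx
    have hxq : x ∈ Multiset.map w (↑q.edges : Multiset (Sym2 V)) := by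
      rw [hu0]; exact Multiset.mem_add.2 (Or.inr hx)
    obtain ⟨e, he, rfl⟩ := Multiset.mem_map.1 hxq
    exact (hw e (q.edges_subset_edgeSet (Multiset.mem_coe.1 he))).le
  have hsum : (Multiset.map w (↑q.edges : Multiset (Sym2 V))).sum
      = (Multiset.map w (↑p.edges : Multiset (Sym2 V))).sum + u0.sum := by
    rw [hu0, Multiset.sum_add]
  simp only [Multiset.map_coe, Multiset.sum_coe] at hsum
  unfold walkWeight
  linarith

lemma walkWeight_reverse {u v : V} (p : G.Walk u v) :
    walkWeight w p.reverse = walkWeight w p := by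
  simp [walkWeight, edges_reverse, List.map_reverse, List.sum_reverse]

lemma walkWeight_append {u v x : V} (p : G.Walk u v) (q : G.Walk v x) :
    walkWeight w (p.append q) = walkWeight w p + walkWeight w q := by
  simp [walkWeight, edges_append]

lemma walkWeight_cons {u v x : V} (h : G.Adj u v) (p : G.Walk v x) :
    walkWeight w (Walk.cons h p) = w s(u, v) + walkWeight w p := by
  simp [walkWeight, edges_cons]

lemma wdist_eq (hG : G.IsAcyclic) (hw : ∀ e ∈ G.edgeSet, 0 < w e) {u v : V}
    (p : G.Walk u v) (hp : p.IsPath) : wdist G w u v = walkWeight w p := by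
  have key : ∀ q : G.Walk u v, walkWeight w p ≤ walkWeight w q := by
    intro q
    have hbp : q.bypass = p :=
      congrArg Subtype.val (hG.path_unique ⟨q.bypass, q.bypass_isPath⟩ ⟨p, hp⟩)
    calc walkWeight w p = walkWeight w q.bypass := by rw [hbp]
      _ ≤ walkWeight w q := walkWeight_le hw q.bypass_isPath q.edges_bypass_subset
  refine le_antisymm (csInf_le ⟨walkWeight w p, ?_⟩ ⟨p, rfl⟩)
    (le_csInf ⟨_, p, rfl⟩ ?_)
  · rintro x ⟨q, rfl⟩; exact key q
  · rintro x ⟨q, rfl⟩; exact key q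

lemma wdist_comm (u v : V) : wdist G w u v = wdist G w v u := by
  unfold wdist
  congr 1
  ext x
  constructor
  · rintro ⟨p, rfl⟩; exact ⟨p.reverse, walkWeight_reverse p⟩
  · rintro ⟨p, rfl⟩; exact ⟨p.reverse, walkWeight_reverse p⟩

lemma wdist_self (hG : G.IsAcyclic) (hw : ∀ e ∈ G.edgeSet, 0 < w e) (u : V) :
    wdist G w u u = 0 :=
  (wdist_eq hG hw Walk.nil IsPath.nil).trans (by simp [walkWeight])

lemma single_isPath {i b : V} (hadj : G.Adj i b) :
    (Walk.cons hadj Walk.nil).IsPath := by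
  rw [cons_isPath_iff]
  exact ⟨IsPath.nil, by simp [hadj.ne]⟩

lemma wdist_adj (hG : G.IsAcyclic) (hw : ∀ e ∈ G.edgeSet, 0 < w e) {i b : V}
    (hadj : G.Adj i b) : wdist G w i b = w s(i, b) := by
  rw [wdist_eq hG hw _ (single_isPath hadj)]
  simp [walkWeight]

/-- Lemma 3a: if `i` lies on the path from `x` to `b`, with `i ~ b`. -/
lemma wdist_through (hG : G.IsAcyclic) (hw : ∀ e ∈ G.edgeSet, 0 < w e) {i b x : V}
    (hadj : G.Adj i b) {p : G.Walk x b} (hp : p.IsPath) (hi : i ∈ p.support) :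
    wdist G w x b = wdist G w x i + w s(i, b) := by
  have hq : (p.takeUntil i hi).IsPath := hp.takeUntil hi
  have hr : (p.dropUntil i hi).IsPath := hp.dropUntil hi
  have hre : p.dropUntil i hi = Walk.cons hadj Walk.nil :=
    congrArg Subtype.val (hG.path_unique ⟨_, hr⟩ ⟨_, single_isPath hadj⟩)
  rw [wdist_eq hG hw p hp, wdist_eq hG hw _ hq]
  conv_lhs => rw [← p.take_spec hi]
  rw [walkWeight_append, hre, walkWeight_cons]
  simp [walkWeight]

/-- Lemma 3b: if `i` is not on the path from `x` to `b`, with `i ~ b`. -/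
lemma wdist_not_through (hG : G.IsAcyclic) (hw : ∀ e ∈ G.edgeSet, 0 < w e) {i b x : V}
    (hadj : G.Adj i b) {p : G.Walk x b} (hp : p.IsPath) (hi : i ∉ p.support) :
    wdist G w x i = wdist G w x b + w s(i, b) := by
  have hp' : (Walk.cons hadj p.reverse).IsPath := by
    rw [cons_isPath_iff]
    refine ⟨hp.reverse, ?_⟩
    rw [support_reverse, List.mem_reverse]
    exact hi
  rw [wdist_comm, wdist_eq hG hw _ hp', walkWeight_cons, walkWeight_reverse,
    ← wdist_eq hG hw p hp, wdist_comm]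
  ring

lemma support_iff (hG : G.IsAcyclic) {i b j c : V} (hib : G.Adj i b) (hjc : G.Adj j c)
    (hij : i ≠ j) (hbc : ¬(b = j ∧ c = i))
    {p : G.Walk i c} (hp : p.IsPath) {q : G.Walk b c} (hq : q.IsPath) :
    j ∈ p.support ↔ j ∈ q.support := by
  constructor
  · intro hjp
    by_contra hnq
    by_cases hi : i ∈ q.support
    · have hpe : p = q.dropUntil i hi :=
        congrArg Subtype.val (hG.path_unique ⟨p, hp⟩ ⟨_, hq.dropUntil hi⟩)
      exact hnq (q.support_dropUntil_subset hi (hpe ▸ hjp))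
    · have hp' : (Walk.cons hib q).IsPath := (cons_isPath_iff hib q).2 ⟨hq, hi⟩
      have hpe : p = Walk.cons hib q :=
        congrArg Subtype.val (hG.path_unique ⟨p, hp⟩ ⟨_, hp'⟩)
      rw [hpe, support_cons] at hjp
      rcases List.mem_cons.1 hjp with h | h
      · exact hij h.symm
      · exact hnq h
  · intro hjq
    by_contra hnp
    by_cases hbj : b = j
    · subst hbj
      have hci : c ≠ i := fun h => hbc ⟨rfl, h⟩
      have hp2 : (Walk.cons hib (Walk.cons hjc Walk.nil)).IsPath := by
        rw [cons_isPath_iff]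
        refine ⟨single_isPath hjc, ?_⟩
        simp only [support_cons, support_nil, List.mem_cons, List.not_mem_nil, or_false,
          List.mem_singleton]
        push_neg
        exact ⟨hib.ne, fun h => hci h.symm⟩
      have hpe : p = Walk.cons hib (Walk.cons hjc Walk.nil) :=
        congrArg Subtype.val (hG.path_unique ⟨p, hp⟩ ⟨_, hp2⟩)
      apply hnp
      rw [hpe]
      simp
    · by_cases hb : b ∈ p.support
      · have hqe : q = p.dropUntil b hb :=
          congrArg Subtype.val (hG.path_unique ⟨q, hq⟩ ⟨_, hp.dropUntil hb⟩)
        exact hnp (p.support_dropUntil_subset hb (hqe ▸ hjq))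
      · have hq' : (Walk.cons hib.symm p).IsPath := (cons_isPath_iff hib.symm p).2 ⟨hp, hb⟩
        have hqe : q = Walk.cons hib.symm p :=
          congrArg Subtype.val (hG.path_unique ⟨q, hq⟩ ⟨_, hq'⟩)
        rw [hqe, support_cons] at hjq
        rcases List.mem_cons.1 hjq with h | h
        · exact hbj h.symm
        · exact hnp h

lemma root_not_on_path (hG : G.IsAcyclic) (hc : G.Connected) {r j c : V} (hjc : G.Adj j c)
    (hd : G.dist c r < G.dist j r) {p : G.Walk r c} (hp : p.IsPath) : j ∉ p.support := by
  intro hj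
  obtain ⟨p₀, hp₀, hlen⟩ := hc.exists_path_of_dist r c
  have hpp : p₀ = p := congrArg Subtype.val (hG.path_unique ⟨p₀, hp₀⟩ ⟨p, hp⟩)
  rw [hpp] at hlen
  have h1 : G.dist r j ≤ (p.takeUntil j hj).length := dist_le _
  have h2 : G.dist j c ≤ (p.dropUntil j hj).length := dist_le _
  have h3 : (p.takeUntil j hj).length + (p.dropUntil j hj).length = p.length := by
    conv_rhs => rw [← p.take_spec hj]
    rw [length_append]
  have h4 : 0 < G.dist j c :=
    SimpleGraph.Reachable.pos_dist_of_ne (hc.preconnected j c) hjc.ne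
  have h5 : G.dist c r = G.dist r c := SimpleGraph.dist_comm ..
  have h6 : G.dist j r = G.dist r j := SimpleGraph.dist_comm ..
  omega

lemma distMatrix_apply {n : ℕ} (G : SimpleGraph (Fin n)) (w : Sym2 (Fin n) → ℝ) (u v : Fin n) :
    distMatrix G w u v = wdist G w u v := rfl

end TreeCongr

/-- The distance matrix of a weighted tree on `n = m + 2 ≥ 2` vertices,
with root `v_1 = 0` and each non-root vertex `i` having parent `a i` (its unique
neighbor on the path to the root, i.e. an adjacent vertex strictly closer to the root),
is congruent to the arrowhead matrix whose first row/column records the weights of the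
edges to parents and whose diagonal is `-2` times those weights. -/
theorem tree_congruent_arrowhead (m : ℕ) (T : SimpleGraph (Fin (m + 2))) (hT : T.IsTree)
    (w : Sym2 (Fin (m + 2)) → ℝ) (hw : ∀ e ∈ T.edgeSet, 0 < w e)
    (a : Fin (m + 2) → Fin (m + 2))
    (ha : ∀ i : Fin (m + 2), i ≠ 0 → T.Adj i (a i) ∧ T.dist (a i) 0 < T.dist i 0) :
    ∃ S : Matrix (Fin (m + 2)) (Fin (m + 2)) ℝ, IsUnit S.det ∧
      S * distMatrix T w * Sᵀ =
        Matrix.of (fun i j =>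
          if i = 0 ∧ j = 0 then 0
          else if i = 0 then w s(j, a j)
          else if j = 0 then w s(i, a i)
          else if i = j then -2 * w s(i, a i)
          else 0) := by
  classical
  obtain ⟨hc, hac⟩ := hT
  have hpath : ∀ u v : Fin (m + 2), ∃ p : T.Walk u v, p.IsPath :=
    fun u v => ⟨((hc.preconnected u v).some).bypass, SimpleGraph.Walk.bypass_isPath _⟩
  choose P hP using hpath
  have hadj : ∀ i : Fin (m + 2), i ≠ 0 → T.Adj i (a i) := fun i h => (ha i h).1
  -- distance facts
  have F2 : ∀ j : Fin (m + 2), j ≠ 0 →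
      wdist T w 0 j = wdist T w 0 (a j) + w s(j, a j) := by
    intro j hj
    have hnot : j ∉ (P 0 (a j)).support :=
      TreeCongr.root_not_on_path hac hc (hadj j hj) (ha j hj).2 (hP 0 (a j))
    exact TreeCongr.wdist_not_through hac hw (hadj j hj) (hP 0 (a j)) hnot
  have F3 : ∀ u : Fin (m + 2), wdist T w u u = 0 := TreeCongr.wdist_self hac hw
  have F4 : ∀ i : Fin (m + 2), i ≠ 0 → wdist T w i (a i) = w s(i, a i) :=
    fun i h => TreeCongr.wdist_adj hac hw (hadj i h)
  have F5 : ∀ i j : Fin (m + 2), i ≠ 0 → j ≠ 0 → i ≠ j →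
      wdist T w i j - wdist T w i (a j)
        = wdist T w (a i) j - wdist T w (a i) (a j) := by
    intro i j hi hj hij
    have hne : ¬(a i = j ∧ a j = i) := by
      rintro ⟨h1, h2⟩
      have d1 := (ha i hi).2
      have d2 := (ha j hj).2
      rw [h1] at d1
      rw [h2] at d2
      omega
    have hiff := TreeCongr.support_iff hac (hadj i hi) (hadj j hj) hij hne
      (hP i (a j)) (hP (a i) (a j))
    by_cases hmem : j ∈ (P i (a j)).support
    · have e1 := TreeCongr.wdist_through hac hw (hadj j hj) (hP i (a j)) hmem
      have e2 := TreeCongr.wdist_through hac hw (hadj j hj) (hP (a i) (a j)) (hiff.1 hmem)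
      rw [e1, e2]
      ring
    · have e1 := TreeCongr.wdist_not_through hac hw (hadj j hj) (hP i (a j)) hmem
      have e2 := TreeCongr.wdist_not_through hac hw (hadj j hj) (hP (a i) (a j))
        (fun h => hmem (hiff.2 h))
      rw [e1, e2]
      ring
  -- the congruence matrix
  set N : Matrix (Fin (m + 2)) (Fin (m + 2)) ℝ :=
    Matrix.of (fun i k => if i ≠ 0 ∧ k = a i then 1 else 0) with hN
  have hNapp : ∀ i k, N i k = if i ≠ 0 ∧ k = a i then (1 : ℝ) else 0 := fun i k => rfl
  set S := (1 : Matrix (Fin (m + 2)) (Fin (m + 2)) ℝ) - N with hS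
  have hNpow : ∀ (t : ℕ) (i k : Fin (m + 2)), (N ^ t) i k ≠ 0 →
      T.dist k 0 + t ≤ T.dist i 0 := by
    intro t
    induction t with
    | zero =>
      intro i k h
      rw [pow_zero] at h
      have hik : i = k := by
        by_contra hik
        exact h (Matrix.one_apply_ne hik)
      subst hik
      simp
    | succ t ih =>
      intro i k h
      rw [pow_succ', Matrix.mul_apply] at h
      by_cases hi : i = 0
      · exact absurd (Finset.sum_eq_zero fun l _ => by simp [hNapp, hi]) h
      · have hsum : ∑ l, N i l * (N ^ t) l k = (N ^ t) (a i) k := by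
          rw [Finset.sum_eq_single (a i)]
          · simp [hNapp, hi]
          · intro b _ hb
            simp [hNapp, hb]
          · intro hm
            exact absurd (Finset.mem_univ _) hm
        rw [hsum] at h
        have h1 := ih (a i) k h
        have h2 := (ha i hi).2
        omega
  have hNnil : N ^ (m + 2) = 0 := by
    ext i k
    simp only [Matrix.zero_apply]
    by_contra h
    have hb := hNpow (m + 2) i k h
    obtain ⟨p, hp, hlen⟩ := hc.exists_path_of_dist i 0
    have hlt : T.dist i 0 < m + 2 := by
      rw [← hlen]
      simpa using hp.length_lt
    omega
  have hSunit : IsUnit S := IsNilpotent.isUnit_one_sub ⟨m + 2, hNnil⟩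
  -- product entry formulas
  have hMN : ∀ (M : Matrix (Fin (m + 2)) (Fin (m + 2)) ℝ) (i l : Fin (m + 2)),
      (N * M) i l = if i = 0 then 0 else M (a i) l := by
    intro M i l
    rw [Matrix.mul_apply]
    by_cases hi : i = 0
    · rw [if_pos hi]
      exact Finset.sum_eq_zero fun b _ => by simp [hNapp, hi]
    · rw [if_neg hi, Finset.sum_eq_single (a i)]
      · simp [hNapp, hi]
      · intro b _ hb
        simp [hNapp, hb]
      · intro hm
        exact absurd (Finset.mem_univ _) hm
  have hMNt : ∀ (M : Matrix (Fin (m + 2)) (Fin (m + 2)) ℝ) (i j : Fin (m + 2)),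
      (M * Nᵀ) i j = if j = 0 then 0 else M i (a j) := by
    intro M i j
    rw [Matrix.mul_apply]
    by_cases hj : j = 0
    · rw [if_pos hj]
      refine Finset.sum_eq_zero fun b _ => ?_
      simp [Matrix.transpose_apply, hNapp, hj]
    · rw [if_neg hj, Finset.sum_eq_single (a j)]
      · simp [Matrix.transpose_apply, hNapp, hj]
      · intro b _ hb
        simp [Matrix.transpose_apply, hNapp, hb]
      · intro hm
        exact absurd (Finset.mem_univ _) hm
  refine ⟨S, (Matrix.isUnit_iff_isUnit_det S).1 hSunit, ?_⟩
  have expand : S * distMatrix T w * Sᵀ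
      = distMatrix T w - N * distMatrix T w
        - (distMatrix T w * Nᵀ - N * distMatrix T w * Nᵀ) := by
    rw [hS, Matrix.transpose_sub, Matrix.transpose_one]
    noncomm_ring
  rw [expand]
  ext i j
  simp only [Matrix.sub_apply, Matrix.of_apply]
  rw [hMN (distMatrix T w) i j, hMNt (distMatrix T w) i j, hMNt (N * distMatrix T w) i j,
    hMN (distMatrix T w) i (a j)]
  by_cases hi : i = 0 <;> by_cases hj : j = 0
  · simp [hi, hj, TreeCongr.distMatrix_apply, F3]
  · have h2 := F2 j hj
    simp only [TreeCongr.distMatrix_apply]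
    simp [hi, hj]
    linarith
  · have h2 := F2 i hi
    simp only [TreeCongr.distMatrix_apply]
    simp [hi, hj]
    rw [TreeCongr.wdist_comm i 0, TreeCongr.wdist_comm (a i) 0]
    linarith
  · by_cases hij : i = j
    · subst hij
      have e1 := F4 i hi
      have e2 : wdist T w (a i) i = w s(i, a i) := by
        rw [TreeCongr.wdist_comm]
        exact F4 i hi
      simp only [TreeCongr.distMatrix_apply]
      simp [hi, hj, F3, e1, e2]
      ring
    · have h5 := F5 i j hi hj hij
      simp only [TreeCongr.distMatrix_apply]
      simp [hi, hj, hij]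
      linarith
end

section
/- Let B be a 3×3 real symmetric matrix with all entries nonnegative and all diagonal entries equal to 0. Then B cannot have exactly two positive eigenvalues and one negative eigenvalue (counted with multiplicity). -/
open Matrix

/-- A `3 × 3` real symmetric hollow (zero diagonal) matrix with
nonnegative entries cannot have exactly two positive eigenvalues and one negative
eigenvalue. -/
theorem hollow_nonneg_not_two_pos_one_neg (B : Matrix (Fin 3) (Fin 3) ℝ)
    (hB : B.IsHermitian) (hnn : ∀ i j, 0 ≤ B i j) (hdiag : ∀ i, B i i = 0) :
    ¬(posEig hB = 2 ∧ negEig hB = 1) := by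
  rintro ⟨hpos, hneg⟩
  set e := hB.eigenvalues with he
  -- translate cardinalities to Finset.card
  have hp : (Finset.univ.filter fun i : Fin 3 => 0 < e i).card = 2 := by
    rw [← Fintype.card_subtype, ← Nat.card_eq_fintype_card]; exact hpos
  have hn : (Finset.univ.filter fun i : Fin 3 => e i < 0).card = 1 := by
    rw [← Fintype.card_subtype, ← Nat.card_eq_fintype_card]; exact hneg
  -- the two filters are disjoint and cover univ
  have hdisj : Disjoint (Finset.univ.filter fun i : Fin 3 => 0 < e i)
      (Finset.univ.filter fun i : Fin 3 => e i < 0) := by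
    rw [Finset.disjoint_filter]
    intro i _ h1 h2
    exact absurd (h1.trans h2) (lt_irrefl 0)
  have hunion : (Finset.univ.filter fun i : Fin 3 => 0 < e i) ∪
      (Finset.univ.filter fun i : Fin 3 => e i < 0) = Finset.univ := by
    apply Finset.eq_univ_of_card
    rw [Finset.card_union_of_disjoint hdisj, hp, hn]
    simp
  -- product of eigenvalues is negative
  have hprodpos : 0 < ∏ i ∈ Finset.univ.filter (fun i : Fin 3 => 0 < e i), e i :=
    Finset.prod_pos (fun i hi => (Finset.mem_filter.mp hi).2)
  obtain ⟨i0, hi0⟩ := Finset.card_eq_one.mp hn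
  have hi0neg : e i0 < 0 := by
    have : i0 ∈ Finset.univ.filter fun i : Fin 3 => e i < 0 := by
      rw [hi0]; exact Finset.mem_singleton_self i0
    exact (Finset.mem_filter.mp this).2
  have hdetneg : B.det < 0 := by
    have hdet : B.det = ∏ i, e i := hB.det_eq_prod_eigenvalues
    rw [hdet, ← hunion, Finset.prod_union hdisj, hi0, Finset.prod_singleton]
    exact mul_neg_of_pos_of_neg hprodpos hi0neg
  -- but det B = 2 * B 0 1 * B 0 2 * B 1 2 ≥ 0
  have hsymm : ∀ i j, B j i = B i j := fun i j => by
    have := congrFun (congrFun hB j) i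
    simpa [Matrix.conjTranspose_apply] using this.symm
  have hdetval : B.det = B 0 1 * B 1 2 * B 0 2 + B 0 2 * B 0 1 * B 1 2 := by
    rw [Matrix.det_fin_three, hdiag 0, hdiag 1, hdiag 2,
      hsymm 0 1, hsymm 0 2, hsymm 1 2]
    ring
  have : 0 ≤ B.det := by
    rw [hdetval]
    have := hnn 0 1; have := hnn 0 2; have := hnn 1 2
    positivity
  linarith
end
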